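/- Let g : ℝⁿ → ℝ be continuously differentiable and let φ : ℝⁿ → ℝ ∪ {+∞} be a proper polyhedral convex function. Let x̄ satisfy −∇g(x̄) ∈ ∂φ(x̄), set ψ = g + φ, K = N_{∂φ(x̄)}(−∇g(x̄)), and ψ̃(x) = g(x) − ⟨∇g(x̄), x − x̄⟩ + ι_K(x − x̄). Then for any α ∈ (0,1), ψ satisfies the KL property at x̄ with exponent α if and only if ψ̃ satisfies the KL property at x̄ with exponent α. Here ψ satisfies the KL property at x̄ with exponent α means: there exist c, ε, ν > 0 such that dist(0, ∇g(x) + ∂φ(x)) ≥ c·(ψ(x) − ψ(x̄))^α for every x with ‖x − x̄‖ < ε and 0 < ψ(x) − ψ(x̄) < ν; and ψ̃ satisfies it at x̄ with exponent α means: there exist c, ε, ν > 0 such that dist(∇g(x̄) − ∇g(x), N_K(x − x̄)) ≥ c·(ψ̃(x) − ψ̃(x̄))^α for every x with x − x̄ ∈ K, ‖x − x̄‖ < ε and 0 < ψ̃(x) − ψ̃(x̄) < ν. -/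

import Mathlib

/-!
Write `vb = -∇g(xb)`. Near `xb` the polyhedral function `φ` agrees with its linear model
`φ xb + ⟪vb, · - xb⟫` on `xb + C`, where `C` is the polyhedral cone cut out by the constraints
active at `(xb, φ xb)`, and off `xb + C` it exceeds the model by at least a multiple of the
distance to `xb + C` (Hoffman's error bound). Convexity turns this into a local description of
the subdifferential: `C` is the normal cone `K`, and for `x - xb ∈ K` small, `∂φ(x)` coincides
near `vb` with `vb + N_K(x - xb)`. So on `xb + K` the gaps `ψ x - ψ xb` and `ψ̃ x - ψ̃ xb` and the
distances in both KL inequalities agree, while for `x - xb ∉ K` every subgradient of `φ` at `x`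
stays a fixed distance away from `vb`, so the KL inequality of `ψ` holds there for small gaps.
-/

open scoped BigOperators

/-- The normal cone to a set `C` at `x` (empty if `x ∉ C`). -/
def normalCone {n : ℕ} (C : Set (EuclideanSpace ℝ (Fin n)))
    (x : EuclideanSpace ℝ (Fin n)) : Set (EuclideanSpace ℝ (Fin n)) :=
  {ξ | x ∈ C ∧ ∀ y ∈ C, (inner ℝ ξ (y - x) : ℝ) ≤ 0}

/-- The convex subdifferential of an extended-real-valued function `φ` at `x`. -/
def ESubdiff {n : ℕ} (φ : EuclideanSpace ℝ (Fin n) → EReal)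
    (x : EuclideanSpace ℝ (Fin n)) : Set (EuclideanSpace ℝ (Fin n)) :=
  {ξ | ∀ y, φ x + (((inner ℝ ξ (y - x) : ℝ)) : EReal) ≤ φ y}


open RealInnerProductSpace Topology

lemma EReal.eq_coe_sub_of_coe_add_eq {a b : ℝ} {X : EReal} (h : (a : EReal) + X = b) :
    X = ((b - a : ℝ) : EReal) := by
  induction X with
  | bot => simp at h
  | top => simp at h
  | coe x =>
    norm_cast at h ⊢
    linarith

section ConicHull

variable {H : Type*} [NormedAddCommGroup H] [NormedSpace ℝ H]

lemma exists_pos_le_one_norm_smul_le (v : H) {r : ℝ} (hr : 0 < r) :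
    ∃ τ : ℝ, 0 < τ ∧ τ ≤ 1 ∧ ‖τ • v‖ ≤ r := by
  refine ⟨min 1 (r / (‖v‖ + 1)), by positivity, min_le_left _ _, ?_⟩
  rw [norm_smul, Real.norm_of_nonneg (by positivity)]
  calc min 1 (r / (‖v‖ + 1)) * ‖v‖ ≤ r / (‖v‖ + 1) * (‖v‖ + 1) := by
        gcongr
        · exact min_le_right _ _
        · linarith
    _ = r := div_mul_cancel₀ _ (by positivity)

def conicHull (G : Finset H) : PointedCone ℝ H where
  carrier := {x | ∃ l : H → ℝ, (∀ v ∈ G, 0 ≤ l v) ∧ ∑ v ∈ G, l v • v = x}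
  add_mem' := by
    rintro _ _ ⟨l, hl, rfl⟩ ⟨l', hl', rfl⟩
    exact ⟨l + l', fun v hv => add_nonneg (hl v hv) (hl' v hv),
      by simp [add_smul, Finset.sum_add_distrib]⟩
  zero_mem' := ⟨0, fun _ _ => le_rfl, by simp⟩
  smul_mem' := by
    rintro c _ ⟨l, hl, rfl⟩
    exact ⟨fun v => c * l v, fun v hv => mul_nonneg c.2 (hl v hv),
      by simp [Finset.smul_sum, mul_smul]⟩

lemma mem_conicHull {G : Finset H} {x : H} :
    x ∈ conicHull G ↔ ∃ l : H → ℝ, (∀ v ∈ G, 0 ≤ l v) ∧ ∑ v ∈ G, l v • v = x :=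
  Iff.rfl

lemma subset_conicHull {G : Finset H} {v : H} (hv : v ∈ G) : v ∈ conicHull G := by
  classical
  exact ⟨fun w => if w = v then 1 else 0, fun w _ => by positivity, by simp [hv]⟩

lemma conicHull_mono {S G : Finset H} (h : S ⊆ G) : conicHull S ≤ conicHull G := by
  classical
  rintro _ ⟨l, hl, rfl⟩
  refine ⟨fun v => if v ∈ S then l v else 0, fun v _ => ?_, ?_⟩
  · by_cases hv : v ∈ S <;> simp [hv, hl v]
  · simp [ite_smul, Finset.sum_ite_mem, Finset.inter_eq_right.2 h]

lemma exists_mem_conicHull_erase [DecidableEq H] {G : Finset H}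
    (hG : ¬LinearIndepOn ℝ id (G : Set H)) {x : H} (hx : x ∈ conicHull G) :
    ∃ v ∈ G, x ∈ conicHull (G.erase v) := by
  obtain ⟨c, hc, v₀, hv₀, hcv₀⟩ : ∃ c : H → ℝ, ∑ v ∈ G, c v • v = 0 ∧ ∃ v ∈ G, 0 < c v := by
    obtain ⟨c, hc, v, hv, hcv⟩ := not_linearIndepOn_finset_iff.1 hG
    rcases hcv.lt_or_gt with hneg | hpos
    · exact ⟨-c, by simpa [neg_smul] using hc, v, hv, by simpa using hneg⟩
    · exact ⟨c, by simpa using hc, v, hv, hpos⟩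
  obtain ⟨l, hl, rfl⟩ := hx
  -- Move along `-c` until the first coefficient of `l` vanishes.
  obtain ⟨v₁, hv₁, hmin⟩ := (G.filter (0 < c ·)).exists_min_image (fun v => l v / c v)
    ⟨v₀, Finset.mem_filter.2 ⟨hv₀, hcv₀⟩⟩
  obtain ⟨hv₁G, hcv₁⟩ := Finset.mem_filter.1 hv₁
  set t := l v₁ / c v₁
  have ht : 0 ≤ t := div_nonneg (hl v₁ hv₁G) hcv₁.le
  refine ⟨v₁, hv₁G, fun v => l v - t * c v, fun v hv => ?_, ?_⟩
  · have hvG := Finset.mem_of_mem_erase hv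
    rcases le_or_gt (c v) 0 with hcv | hcv
    · nlinarith [hl v hvG]
    · have := hmin v (Finset.mem_filter.2 ⟨hvG, hcv⟩)
      rw [le_div_iff₀ hcv] at this
      linarith
  · rw [Finset.sum_erase _ (by simp only [t, div_mul_cancel₀ _ hcv₁.ne', sub_self, zero_smul])]
    simp only [sub_smul, Finset.sum_sub_distrib, mul_smul, ← Finset.smul_sum, hc, smul_zero,
      sub_zero]

/-- Carathéodory's theorem for conic hulls. -/
lemma exists_linearIndepOn_of_mem_conicHull (G : Finset H) {x : H} (hx : x ∈ conicHull G) :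
    ∃ S ⊆ G, LinearIndepOn ℝ id (S : Set H) ∧ x ∈ conicHull S := by
  classical
  induction G using Finset.strongInduction with
  | H G ih =>
    by_cases hG : LinearIndepOn ℝ id (G : Set H)
    · exact ⟨G, subset_rfl, hG, hx⟩
    obtain ⟨v, hv, hxv⟩ := exists_mem_conicHull_erase hG hx
    obtain ⟨S, hS, hSind, hxS⟩ := ih _ (Finset.erase_ssubset hv) hxv
    exact ⟨S, hS.trans (Finset.erase_subset _ _), hSind, hxS⟩

lemma isClosed_conicHull_of_linearIndepOn {S : Finset H} (hS : LinearIndepOn ℝ id (S : Set H)) :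
    IsClosed (conicHull S : Set H) := by
  classical
  set T := Fintype.linearCombination ℝ (fun v : S => (v : H))
  have hT : IsClosedEmbedding T :=
    LinearMap.isClosedEmbedding_of_injective (LinearMap.ker_eq_bot.2
      (linearIndependent_iff_injective_fintypeLinearCombination.1 hS))
  have himage : (conicHull S : Set H) = T '' {f | ∀ i, 0 ≤ f i} := by
    ext x
    simp only [SetLike.mem_coe, mem_conicHull, Set.mem_image, Set.mem_ofPred_eq, T,
      Fintype.linearCombination_apply]
    constructor
    · rintro ⟨l, hl, rfl⟩
      exact ⟨fun v => l v, fun v => hl v v.2, Finset.sum_coe_sort S fun v => l v • v⟩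
    · rintro ⟨f, hf, rfl⟩
      refine ⟨fun v => if hv : v ∈ S then f ⟨v, hv⟩ else 0, fun v hv => by simp [hv, hf], ?_⟩
      rw [← Finset.sum_coe_sort S]
      exact Finset.sum_congr rfl fun v _ => by simp
  rw [himage]
  exact hT.isClosedMap _ (isClosed_le continuous_const continuous_id)

lemma isClosed_conicHull (G : Finset H) : IsClosed (conicHull G : Set H) := by
  have hunion : (conicHull G : Set H) =
      ⋃ S ∈ {S : Finset H | S ⊆ G ∧ LinearIndepOn ℝ id (S : Set H)}, (conicHull S : Set H) := by
    ext x
    simp only [Set.mem_iUnion, Set.mem_ofPred_eq, SetLike.mem_coe, exists_prop]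
    refine ⟨fun hx => ?_, fun ⟨S, ⟨hSG, _⟩, hx⟩ => conicHull_mono hSG hx⟩
    obtain ⟨S, hSG, hS, hxS⟩ := exists_linearIndepOn_of_mem_conicHull G hx
    exact ⟨S, ⟨hSG, hS⟩, hxS⟩
  rw [hunion]
  exact (G.powerset.finite_toSet.subset fun S hS => Finset.mem_powerset.2 hS.1).isClosed_biUnion
    fun S hS => isClosed_conicHull_of_linearIndepOn hS.2

lemma LinearIndepOn.exists_sum_le_mul_norm {S : Finset H} (hS : LinearIndepOn ℝ id (S : Set H)) :
    ∃ β : ℝ, ∀ l : H → ℝ, ∑ v ∈ S, l v ≤ β * ‖∑ v ∈ S, l v • v‖ := by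
  set T := Fintype.linearCombination ℝ (fun v : S => (v : H))
  obtain ⟨K, -, hK⟩ := T.exists_antilipschitzWith (LinearMap.ker_eq_bot.2
    (linearIndependent_iff_injective_fintypeLinearCombination.1 hS))
  refine ⟨S.card * K, fun l => ?_⟩
  have hbound := ZeroHomClass.bound_of_antilipschitz T hK fun v => l v
  simp only [T, Fintype.linearCombination_apply] at hbound
  rw [Finset.sum_coe_sort S fun v => l v • v] at hbound
  calc ∑ v ∈ S, l v = ∑ v : S, l v := (Finset.sum_coe_sort S l).symm
    _ ≤ ∑ _v : S, ‖fun v : S => l v‖ :=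
        Finset.sum_le_sum fun v _ =>
          (Real.le_norm_self _).trans (norm_le_pi_norm (fun v : S => l v) v)
    _ = S.card * ‖fun v : S => l v‖ := by simp
    _ ≤ S.card * (K * ‖∑ v ∈ S, l v • v‖) := by gcongr
    _ = S.card * K * ‖∑ v ∈ S, l v • v‖ := by ring

end ConicHull

section PolyhedralCone

variable {H : Type*} [NormedAddCommGroup H] [InnerProductSpace ℝ H]

lemma convex_setOf_forall_inner_add_mul_le {ι : Type*} (w : ι → H) (r s : ι → ℝ) :
    Convex ℝ {p : H × ℝ | ∀ j, ⟪w j, p.1⟫ + r j * p.2 ≤ s j} := by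
  intro p hp q hq a b ha hb hab j
  have hpq : ⟪w j, (a • p + b • q).1⟫ + r j * (a • p + b • q).2 =
      a * (⟪w j, p.1⟫ + r j * p.2) + b * (⟪w j, q.1⟫ + r j * q.2) := by
    simp only [Prod.fst_add, Prod.snd_add, Prod.smul_fst, Prod.smul_snd, inner_add_right,
      real_inner_smul_right, smul_eq_mul]
    ring
  calc _ = a * (⟪w j, p.1⟫ + r j * p.2) + b * (⟪w j, q.1⟫ + r j * q.2) := hpq
    _ ≤ a * s j + b * s j := by gcongr; exacts [hp j, hq j]
    _ = s j := by rw [← add_mul, hab, one_mul]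

noncomputable def polyhedralCone [CompleteSpace H] (G : Finset H) : ProperCone ℝ H :=
  ProperCone.innerDual (-(G : Set H))

lemma mem_polyhedralCone [CompleteSpace H] {G : Finset H} {x : H} :
    x ∈ polyhedralCone G ↔ ∀ v ∈ G, ⟪v, x⟫ ≤ 0 := by
  simp only [polyhedralCone, ProperCone.mem_innerDual, Set.mem_neg, Finset.mem_coe]
  refine ⟨fun h v hv => ?_, fun h v hv => ?_⟩
  · simpa [inner_neg_left] using h (x := -v) (by simpa using hv)
  · simpa [inner_neg_left] using h _ hv

/-- Farkas' lemma. -/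
lemma mem_conicHull_of_forall_inner_nonpos [CompleteSpace H] {G : Finset H} {u : H}
    (hu : ∀ z ∈ polyhedralCone G, ⟪u, z⟫ ≤ 0) : u ∈ conicHull G := by
  by_contra hnot
  obtain ⟨y, hy, huy⟩ :=
    ProperCone.hyperplane_separation' (⟨conicHull G, isClosed_conicHull G⟩ : ProperCone ℝ H) hnot
  have hmem : -y ∈ polyhedralCone G := mem_polyhedralCone.2 fun v hv => by
    simpa [inner_neg_right] using hy v (subset_conicHull hv)
  have := hu _ hmem
  rw [inner_neg_right] at this
  linarith

lemma ProperCone.exists_moreau_decomposition [CompleteSpace H] (C : ProperCone ℝ H) (z : H) :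
    ∃ p ∈ C, (∀ c ∈ C, ⟪z - p, c⟫ ≤ 0) ∧ ⟪z - p, p⟫ = 0 := by
  obtain ⟨p, hp, hmin⟩ := exists_norm_eq_iInf_of_complete_convex C.nonempty
    C.isClosed.isComplete C.convex z
  rw [norm_eq_iInf_iff_real_inner_le_zero C.convex hp] at hmin
  have hpolar : ∀ c ∈ C, ⟪z - p, c⟫ ≤ 0 := fun c hc => by
    simpa using hmin (p + c) (C.add_mem hp hc)
  refine ⟨p, hp, hpolar, le_antisymm (hpolar p hp) ?_⟩
  simpa [inner_neg_right] using hmin 0 C.zero_mem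

/-- Hoffman's error bound for polyhedral cones. -/
theorem exists_norm_sub_le_of_forall_inner_le [FiniteDimensional ℝ H] (G : Finset H) :
    ∃ γ > 0, ∀ (z : H) (b : ℝ), 0 ≤ b → (∀ v ∈ G, ⟪v, z⟫ ≤ b) →
      ∃ p ∈ polyhedralCone G, ‖z - p‖ ≤ γ * b := by
  have hcoef : ∀ S : Finset H, ∃ β : ℝ, LinearIndepOn ℝ id (S : Set H) →
      ∀ l : H → ℝ, ∑ v ∈ S, l v ≤ β * ‖∑ v ∈ S, l v • v‖ := fun S => by
    by_cases hS : LinearIndepOn ℝ id (S : Set H)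
    · obtain ⟨β, hβ⟩ := hS.exists_sum_le_mul_norm
      exact ⟨β, fun _ => hβ⟩
    · exact ⟨0, fun h => absurd h hS⟩
  choose β hβ using hcoef
  obtain ⟨γ, hγ⟩ := (G.powerset.image β).exists_le
  refine ⟨max γ 1, by positivity, fun z b hb hzb => ?_⟩
  obtain ⟨p, hp, hpolar, hperp⟩ := (polyhedralCone G).exists_moreau_decomposition z
  refine ⟨p, hp, ?_⟩
  -- `z - p` lies in the polar cone, so it is a nonnegative combination of independent `v ∈ G`.
  obtain ⟨S, hSG, hS, l, hl, hlu⟩ := exists_linearIndepOn_of_mem_conicHull G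
    (mem_conicHull_of_forall_inner_nonpos hpolar)
  have hβS : β S ≤ max γ 1 :=
    (hγ _ (Finset.mem_image_of_mem β (Finset.mem_powerset.2 hSG))).trans (le_max_left _ _)
  have hsq : ‖z - p‖ ^ 2 ≤ max γ 1 * b * ‖z - p‖ :=
    calc ‖z - p‖ ^ 2 = ⟪z - p, z⟫ := by
          rw [← real_inner_self_eq_norm_sq, inner_sub_right _ z p, hperp, sub_zero]
      _ = ∑ v ∈ S, l v * ⟪v, z⟫ := by
          rw [← hlu, sum_inner]
          exact Finset.sum_congr rfl fun v _ => real_inner_smul_left _ _ _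
      _ ≤ ∑ v ∈ S, l v * b :=
          Finset.sum_le_sum fun v hv => mul_le_mul_of_nonneg_left (hzb v (hSG hv)) (hl v hv)
      _ = (∑ v ∈ S, l v) * b := (Finset.sum_mul _ _ _).symm
      _ ≤ (β S * ‖z - p‖) * b := by
          gcongr
          simpa [hlu] using hβ S hS l
      _ ≤ max γ 1 * b * ‖z - p‖ := by
          rw [mul_right_comm]
          gcongr
  rcases (norm_nonneg (z - p)).eq_or_lt with h0 | hpos
  · rw [← h0]
    positivity
  · nlinarith

end PolyhedralCone

section Distance

open scoped Pointwise

open Metric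

lemma infEDist_eq_of_subset_of_inter_ball {α : Type*} [PseudoMetricSpace α] {A B : Set α}
    {a q : α} {r : ℝ} (ha : a ∈ A) (hAB : A ⊆ B) (hBA : B ∩ ball a r ⊆ A)
    (hq : dist q a < r / 2) : infEDist q A = infEDist q B := by
  refine le_antisymm (le_infEDist.2 fun b hb => ?_) (infEDist_anti hAB)
  by_cases hbr : dist b a < r
  · exact infEDist_le_edist_of_mem (hBA ⟨hb, hbr⟩)
  · calc infEDist q A ≤ edist q a := infEDist_le_edist_of_mem ha
      _ ≤ edist q b := by
          rw [edist_dist, edist_dist]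
          exact ENNReal.ofReal_le_ofReal (by linarith [dist_triangle b q a, dist_comm q b])

lemma infEDist_zero_setOf_eq_add {H : Type*} [SeminormedAddCommGroup H] (a : H) (S : Set H) :
    infEDist 0 {v | ∃ ξ ∈ S, v = a + ξ} = infEDist (-a) S := by
  have hS : {v | ∃ ξ ∈ S, v = a + ξ} = a +ᵥ S := by
    ext v
    simp [Set.mem_vadd_set, eq_comm]
  rw [hS, ← infEDist_vadd a (-a) S, vadd_eq_add, add_neg_cancel]

end Distance

section Subdifferential

variable {n : ℕ}

local notation "E" => EuclideanSpace ℝ (Fin n)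

lemma exists_eq_coe_of_mem_ESubdiff {φ : E → EReal} {x y ξ : E} (hbot : φ x ≠ ⊥)
    (htop : φ y ≠ ⊤) (hξ : ξ ∈ ESubdiff φ x) : ∃ μ : ℝ, φ x = μ := by
  have hx : φ x ≠ ⊤ := fun hx => htop (top_le_iff.1 (by simpa [hx] using hξ y))
  exact ⟨(φ x).toReal, (EReal.coe_toReal hx hbot).symm⟩

lemma mem_ESubdiff_of_forall_norm_sub_le {φ : E → EReal}
    (hconv : Convex ℝ {p : E × ℝ | φ p.1 ≤ p.2}) {x₀ ξ : E} {a r : ℝ} (hr : 0 < r)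
    (hx₀ : φ x₀ = a) (hloc : ∀ y, ‖y - x₀‖ ≤ r → ((a + ⟪ξ, y - x₀⟫ : ℝ) : EReal) ≤ φ y) :
    ξ ∈ ESubdiff φ x₀ := by
  intro y
  rw [hx₀, ← EReal.coe_add]
  refine EReal.le_of_forall_lt_iff_le.1 fun ρ hρ => ?_
  obtain ⟨τ, hτ0, hτ1, hτr⟩ := exists_pos_le_one_norm_smul_le (y - x₀) hr
  have hseg : φ (x₀ + τ • (y - x₀)) ≤ (((1 - τ) * a + τ * ρ : ℝ) : EReal) := by
    have hpt : (1 - τ) • ((x₀, a) : E × ℝ) + τ • (y, ρ) =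
        (x₀ + τ • (y - x₀), (1 - τ) * a + τ * ρ) := by
      ext1
      · simp only [Prod.fst_add, Prod.smul_fst]
        module
      · simp
    have := hconv (x := (x₀, a)) (y := (y, ρ)) (by simp [hx₀]) hρ.le (sub_nonneg.2 hτ1) hτ0.le
      (by ring)
    rwa [hpt] at this
  have hle := (hloc _ (by simpa using hτr)).trans hseg
  rw [add_sub_cancel_left, real_inner_smul_right, EReal.coe_le_coe_iff] at hle
  rw [EReal.coe_le_coe_iff]
  nlinarith

end Subdifferential

section ConeModel

variable {n : ℕ}

local notation "E" => EuclideanSpace ℝ (Fin n)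

lemma inner_eq_zero_of_mem_normalCone {C : ProperCone ℝ E} {d η : E}
    (hη : η ∈ normalCone (C : Set E) d) : ⟪η, d⟫ = 0 := by
  obtain ⟨hd, hη⟩ := hη
  have h0 := hη 0 C.zero_mem
  have h2 := hη (d + d) (C.add_mem hd hd)
  rw [zero_sub, inner_neg_right] at h0
  rw [add_sub_cancel_right] at h2
  linarith

lemma inner_nonpos_of_mem_normalCone {C : ProperCone ℝ E} {d η k : E}
    (hη : η ∈ normalCone (C : Set E) d) (hk : k ∈ C) : ⟪η, k⟫ ≤ 0 := by
  simpa using hη.2 (k + d) (C.add_mem hk hη.1)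

/-- Near `xb`, `φ` agrees with the linear model `μ + ⟪vb, · - xb⟫` on `xb + C` and exceeds it by
at least `dist (· - xb) C / γ` off `xb + C`. -/
structure IsLocalConeModel (φ : E → EReal) (xb vb : E) (μ : ℝ) (C : ProperCone ℝ E)
    (δ γ : ℝ) : Prop where
  radius_pos : 0 < δ
  rate_pos : 0 < γ
  eq_of_mem : ∀ z ∈ C, ‖z‖ ≤ δ → φ (xb + z) = ((μ + ⟪vb, z⟫ : ℝ) : EReal)
  exists_mem_norm_sub_le : ∀ e, ‖e‖ ≤ δ → ∀ ρ : ℝ, φ (xb + e) ≤ ρ → ρ ≤ μ + δ →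
    ∃ p ∈ C, ‖e - p‖ ≤ γ * (ρ - μ - ⟪vb, e⟫)

namespace IsLocalConeModel

variable {φ : EuclideanSpace ℝ (Fin n) → EReal} {xb vb : EuclideanSpace ℝ (Fin n)} {μ δ γ : ℝ}
  {C : ProperCone ℝ (EuclideanSpace ℝ (Fin n))}

lemma apply_eq (h : IsLocalConeModel φ xb vb μ C δ γ) : φ xb = μ := by
  simpa using h.eq_of_mem 0 C.zero_mem (by simpa using h.radius_pos.le)

lemma sub_mem_normalCone (h : IsLocalConeModel φ xb vb μ C δ γ) {d u : E} (hd : d ∈ C)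
    (hdδ : ‖d‖ ≤ δ / 2) (hu : u ∈ ESubdiff φ (xb + d)) : u - vb ∈ normalCone (C : Set E) d := by
  refine ⟨hd, fun k hk => ?_⟩
  obtain ⟨τ, hτ0, hτ1, hτ⟩ := exists_pos_le_one_norm_smul_le (k - d) (half_pos h.radius_pos)
  have heC : d + τ • (k - d) ∈ C := by
    rw [show d + τ • (k - d) = (1 - τ) • d + τ • k by module]
    exact C.convex hd hk (sub_nonneg.2 hτ1) hτ0.le (by ring)
  have heδ : ‖d + τ • (k - d)‖ ≤ δ := by linarith [norm_add_le d (τ • (k - d))]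
  have hsub := hu (xb + (d + τ • (k - d)))
  rw [h.eq_of_mem d hd (by linarith [h.radius_pos]), h.eq_of_mem _ heC heδ, add_sub_add_left_eq_sub,
    add_sub_cancel_left, ← EReal.coe_add, EReal.coe_le_coe_iff] at hsub
  simp only [inner_add_right, real_inner_smul_right] at hsub
  rw [inner_sub_left]
  nlinarith

lemma coe_add_inner_le (h : IsLocalConeModel φ xb vb μ C δ γ) {η e : E}
    (hηC : ∀ k ∈ C, ⟪η, k⟫ ≤ 0) (hηγ : ‖η‖ * γ ≤ 1) (hη : ‖η‖ ≤ 1)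
    (he : ‖e‖ ≤ δ / (1 + ‖vb‖)) : ((μ + ⟪vb + η, e⟫ : ℝ) : EReal) ≤ φ (xb + e) := by
  have heδ : ‖e‖ ≤ δ := he.trans (div_le_self h.radius_pos.le (by simp))
  refine EReal.le_of_forall_lt_iff_le.1 fun ρ hρ => EReal.coe_le_coe_iff.2 ?_
  rw [inner_add_left]
  by_cases hρδ : ρ ≤ μ + δ
  · obtain ⟨p, hp, hep⟩ := h.exists_mem_norm_sub_le e heδ ρ hρ.le hρδ
    have hF : 0 ≤ ρ - μ - ⟪vb, e⟫ :=
      nonneg_of_mul_nonneg_right ((norm_nonneg _).trans hep) h.rate_pos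
    have hηe : ⟪η, e⟫ ≤ ρ - μ - ⟪vb, e⟫ :=
      calc ⟪η, e⟫ = ⟪η, p⟫ + ⟪η, e - p⟫ := by rw [← inner_add_right, add_sub_cancel]
        _ ≤ 0 + ‖η‖ * ‖e - p‖ := add_le_add (hηC p hp) (real_inner_le_norm _ _)
        _ ≤ ‖η‖ * (γ * (ρ - μ - ⟪vb, e⟫)) := by
            rw [zero_add]
            exact mul_le_mul_of_nonneg_left hep (norm_nonneg _)
        _ ≤ ρ - μ - ⟪vb, e⟫ := by nlinarith
    linarith
  · have hsmall : ⟪vb, e⟫ + ⟪η, e⟫ ≤ δ :=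
      calc ⟪vb, e⟫ + ⟪η, e⟫ ≤ ‖vb‖ * ‖e‖ + ‖η‖ * ‖e‖ :=
            add_le_add (real_inner_le_norm _ _) (real_inner_le_norm _ _)
        _ ≤ (1 + ‖vb‖) * ‖e‖ := by nlinarith [norm_nonneg e]
        _ ≤ δ := by rwa [← le_div_iff₀' (by positivity)]
    linarith

lemma add_mem_ESubdiff (h : IsLocalConeModel φ xb vb μ C δ γ)
    (hconv : Convex ℝ {p : E × ℝ | φ p.1 ≤ p.2}) {d η : E} (hd : d ∈ C)
    (hdδ : ‖d‖ ≤ δ / (1 + ‖vb‖) / 2) (hη : η ∈ normalCone (C : Set E) d) (hηγ : ‖η‖ * γ ≤ 1)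
    (hη1 : ‖η‖ ≤ 1) : vb + η ∈ ESubdiff φ (xb + d) := by
  have hr : 0 < δ / (1 + ‖vb‖) / 2 := by have := h.radius_pos; positivity
  have hdδ' : ‖d‖ ≤ δ := by
    linarith [div_le_self h.radius_pos.le (by simp : (1 : ℝ) ≤ 1 + ‖vb‖)]
  refine mem_ESubdiff_of_forall_norm_sub_le hconv hr (h.eq_of_mem d hd hdδ') fun y hy => ?_
  have hyd : y - xb = d + (y - (xb + d)) := by abel
  have hye : ‖y - xb‖ ≤ δ / (1 + ‖vb‖) := by
    linarith [hyd ▸ norm_add_le d (y - (xb + d))]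
  have := h.coe_add_inner_le (fun k hk => inner_nonpos_of_mem_normalCone hη hk) hηγ hη1 hye
  rw [add_sub_cancel] at this
  convert this using 2
  rw [hyd, inner_add_right, inner_add_left vb η d, inner_eq_zero_of_mem_normalCone hη]
  ring

lemma normalCone_ESubdiff_eq (h : IsLocalConeModel φ xb vb μ C δ γ)
    (hconv : Convex ℝ {p : E × ℝ | φ p.1 ≤ p.2}) (hstat : vb ∈ ESubdiff φ xb) :
    normalCone (ESubdiff φ xb) vb = C := by
  ext z
  constructor
  · rintro ⟨-, hz⟩
    obtain ⟨p, hp, hpolar, hperp⟩ := C.exists_moreau_decomposition z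
    -- `vb + τ • (z - p)` is a subgradient at `xb` for small `τ > 0`, so `hz` forces `z = p`.
    obtain ⟨τ, hτ0, -, hτ⟩ := exists_pos_le_one_norm_smul_le (z - p)
      (lt_min one_pos (inv_pos.2 h.rate_pos))
    have hmem := h.add_mem_ESubdiff (η := τ • (z - p)) hconv C.zero_mem
      (by rw [norm_zero]; have := h.radius_pos; positivity) ⟨C.zero_mem, fun k hk => by
        simpa [real_inner_smul_left] using mul_nonpos_of_nonneg_of_nonpos hτ0.le (hpolar k hk)⟩
      (by rw [← le_div_iff₀ h.rate_pos, one_div]; exact hτ.trans (min_le_right _ _))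
      (hτ.trans (min_le_left _ _))
    rw [add_zero] at hmem
    have hzp : ⟪z, z - p⟫ ≤ 0 := by
      have := hz _ hmem
      rw [add_sub_cancel_left, real_inner_smul_right] at this
      exact nonpos_of_mul_nonpos_right this hτ0
    have hzero : z - p = 0 := by
      rw [← real_inner_self_nonpos]
      calc ⟪z - p, z - p⟫ = ⟪z, z - p⟫ - ⟪z - p, p⟫ := by
            rw [inner_sub_left, real_inner_comm p]
        _ ≤ 0 := by rw [hperp, sub_zero]; exact hzp
    rwa [sub_eq_zero.1 hzero]
  · intro hz
    refine ⟨hstat, fun u hu => ?_⟩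
    obtain ⟨τ, hτ0, -, hτ⟩ := exists_pos_le_one_norm_smul_le z h.radius_pos
    have hsub := hu (xb + τ • z)
    rw [h.apply_eq, h.eq_of_mem _ (C.smul_mem hz hτ0.le) hτ, add_sub_cancel_left,
      ← EReal.coe_add, EReal.coe_le_coe_iff, real_inner_smul_right, real_inner_smul_right] at hsub
    rw [inner_sub_right, ← real_inner_comm z u, ← real_inner_comm z vb]
    nlinarith

lemma exists_infEDist_ESubdiff_eq (h : IsLocalConeModel φ xb vb μ C δ γ)
    (hconv : Convex ℝ {p : E × ℝ | φ p.1 ≤ p.2}) :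
    ∃ r > 0, ∀ d ∈ C, ‖d‖ ≤ r → ∀ q, dist q vb < r →
      Metric.infEDist q (ESubdiff φ (xb + d)) = Metric.infEDist (q - vb) (normalCone C d) := by
  have hδ := h.radius_pos
  have hγ := h.rate_pos
  set r₀ := min 1 γ⁻¹
  have hr₀ : 0 < r₀ := lt_min one_pos (inv_pos.2 hγ)
  refine ⟨min (δ / (1 + ‖vb‖) / 2) (r₀ / 2), by positivity, fun d hd hdr q hq => ?_⟩
  have hdδ : ‖d‖ ≤ δ / (1 + ‖vb‖) / 2 := hdr.trans (min_le_left _ _)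
  have hsmall : ∀ η ∈ normalCone (C : Set E) d, ‖η‖ < r₀ → vb + η ∈ ESubdiff φ (xb + d) :=
    fun η hη hηr => h.add_mem_ESubdiff hconv hd hdδ hη
      (by rw [← le_div_iff₀ hγ, one_div]; exact hηr.le.trans (min_le_right _ _))
      (hηr.le.trans (min_le_left _ _))
  have hmem0 : (0 : E) ∈ normalCone (C : Set E) d := ⟨hd, fun _ _ => by simp⟩
  rw [← Metric.infEDist_vadd vb (q - vb), vadd_eq_add, add_sub_cancel]
  refine infEDist_eq_of_subset_of_inter_ball (a := vb) (r := r₀)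
    (by simpa using hsmall 0 hmem0 (by simpa using hr₀))
    (fun u hu => ⟨u - vb, ?_, by simp⟩) ?_ (hq.trans_le (min_le_right _ _))
  · refine h.sub_mem_normalCone hd ?_ hu
    linarith [div_le_self hδ.le (by simp : (1 : ℝ) ≤ 1 + ‖vb‖)]
  · rintro _ ⟨⟨η, hη, rfl⟩, hball⟩
    refine hsmall η hη ?_
    simpa [dist_eq_norm] using hball

lemma exists_le_norm_sub_of_notMem (h : IsLocalConeModel φ xb vb μ C δ γ) :
    ∃ r > 0, ∀ z ∉ C, ‖z‖ ≤ r → ∀ ρ : ℝ, φ (xb + z) = ρ → ρ ≤ μ + r →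
      ∀ u ∈ ESubdiff φ (xb + z), r ≤ ‖u - vb‖ := by
  have hδ := h.radius_pos
  have hγ := h.rate_pos
  set δ' := δ / (1 + γ * (1 + ‖vb‖))
  have hδ' : 0 < δ' := by positivity
  have hδ'δ : δ' * (1 + γ * (1 + ‖vb‖)) = δ := div_mul_cancel₀ _ (by positivity)
  have hδ'le : δ' ≤ δ := div_le_self hδ.le (le_add_of_nonneg_right (by positivity))
  refine ⟨min δ' γ⁻¹, by positivity, fun z hz hzr ρ hρ hρμ u hu => ?_⟩
  have hzδ : ‖z‖ ≤ δ' := hzr.trans (min_le_left _ _)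
  have hρδ : ρ - μ ≤ δ' := by linarith [min_le_left δ' γ⁻¹]
  obtain ⟨p, hp, hzp⟩ := h.exists_mem_norm_sub_le z (hzδ.trans hδ'le) ρ hρ.le (by linarith)
  set F := ρ - μ - ⟪vb, z⟫
  have hvbz : -⟪vb, z⟫ ≤ ‖vb‖ * δ' := by
    nlinarith [neg_le_abs ⟪vb, z⟫, abs_real_inner_le_norm vb z, norm_nonneg vb]
  have hFpos : 0 < F := by
    by_contra hF
    have : z - p = 0 := norm_le_zero_iff.1 (hzp.trans (by nlinarith))
    exact hz (sub_eq_zero.1 this ▸ hp)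
  have hpδ : ‖p‖ ≤ δ := by
    have : ‖p‖ ≤ ‖z‖ + ‖z - p‖ := by simpa using norm_sub_le z (z - p)
    nlinarith
  -- Compare the subgradient inequality at `xb + z` with the linear model at `xb + p`.
  have hsub := hu (xb + p)
  rw [hρ, h.eq_of_mem p hp hpδ, add_sub_add_left_eq_sub, ← EReal.coe_add,
    EReal.coe_le_coe_iff] at hsub
  have hF : F ≤ γ * F * ‖u - vb‖ :=
    calc F ≤ ⟪u - vb, z - p⟫ := by
          simp only [F, inner_sub_left, inner_sub_right] at hsub ⊢
          linarith
      _ ≤ ‖u - vb‖ * ‖z - p‖ := real_inner_le_norm _ _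
      _ ≤ ‖u - vb‖ * (γ * F) := mul_le_mul_of_nonneg_left hzp (norm_nonneg _)
      _ = γ * F * ‖u - vb‖ := by ring
  have : γ⁻¹ ≤ ‖u - vb‖ := by
    rw [inv_le_iff_one_le_mul₀' hγ]
    nlinarith
  exact (min_le_right _ _).trans this

end IsLocalConeModel

end ConeModel

section Polyhedral

variable {n m : ℕ}

local notation "E" => EuclideanSpace ℝ (Fin n)

noncomputable def activeSet (w : Fin m → E) (r s : Fin m → ℝ) (xb : E) (μ : ℝ) :
    Finset (Fin m) :=
  Finset.univ.filter fun j => ⟪w j, xb⟫ + r j * μ = s j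

lemma exists_le_iff_forall_mem_activeSet {φ : E → EReal} {w : Fin m → E} {r s : Fin m → ℝ}
    {xb : E} {μ : ℝ} (hepi : ∀ x (ρ : ℝ), φ x ≤ ρ ↔ ∀ j, ⟪w j, x⟫ + r j * ρ ≤ s j)
    (hμ : φ xb = μ) :
    ∃ δ > 0, ∀ z (ρ : ℝ), ‖z‖ ≤ δ → |ρ| ≤ δ →
      (φ (xb + z) ≤ ((μ + ρ : ℝ) : EReal) ↔
        ∀ j ∈ activeSet w r s xb μ, ⟪w j, z⟫ + r j * ρ ≤ 0) := by
  have hfeas := (hepi xb μ).1 hμ.le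
  have hinactive : ∀ᶠ δ in 𝓝[>] (0 : ℝ), ∀ j, j ∉ activeSet w r s xb μ →
      ∀ z (ρ : ℝ), ‖z‖ ≤ δ → |ρ| ≤ δ → ⟪w j, xb + z⟫ + r j * (μ + ρ) ≤ s j := by
    refine Filter.eventually_all.2 fun j => ?_
    by_cases hj : j ∈ activeSet w r s xb μ
    · exact Filter.Eventually.of_forall fun _ hj' => absurd hj hj'
    have hslack : 0 < s j - (⟪w j, xb⟫ + r j * μ) :=
      sub_pos.2 ((hfeas j).lt_of_ne fun h => hj (by simp [activeSet, h]))
    filter_upwards [nhdsWithin_le_nhds (eventually_lt_nhds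
      (div_pos hslack (by positivity : 0 < ‖w j‖ + |r j| + 1)))] with δ hδ _ z ρ hz hρ
    rw [lt_div_iff₀ (by positivity)] at hδ
    have hwz : ⟪w j, z⟫ ≤ ‖w j‖ * δ :=
      (real_inner_le_norm _ _).trans (mul_le_mul_of_nonneg_left hz (norm_nonneg _))
    have hrρ : r j * ρ ≤ |r j| * δ :=
      (le_abs_self _).trans (abs_mul (r j) ρ ▸ mul_le_mul_of_nonneg_left hρ (abs_nonneg _))
    rw [inner_add_right]
    nlinarith [norm_nonneg (w j), abs_nonneg (r j), (abs_nonneg ρ).trans hρ]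
  obtain ⟨δ, hδ, hδpos⟩ := (hinactive.and self_mem_nhdsWithin).exists
  refine ⟨δ, hδpos, fun z ρ hz hρ => ?_⟩
  rw [hepi]
  constructor
  · intro hall j hj
    have hact : ⟪w j, xb⟫ + r j * μ = s j := (Finset.mem_filter.1 hj).2
    linarith [hall j, inner_add_right (𝕜 := ℝ) (w j) xb z]
  · intro hact j
    by_cases hj : j ∈ activeSet w r s xb μ
    · have hact' : ⟪w j, xb⟫ + r j * μ = s j := (Finset.mem_filter.1 hj).2
      linarith [hact j hj, inner_add_right (𝕜 := ℝ) (w j) xb z]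
    · exact hδ j hj z ρ hz hρ

theorem exists_isLocalConeModel {φ : E → EReal} {w : Fin m → E} {r s : Fin m → ℝ}
    {xb vb : E} {μ : ℝ} (hepi : ∀ x (ρ : ℝ), φ x ≤ ρ ↔ ∀ j, ⟪w j, x⟫ + r j * ρ ≤ s j)
    (hμ : φ xb = μ) (hstat : vb ∈ ESubdiff φ xb) :
    ∃ δ γ, IsLocalConeModel φ xb vb μ
      (polyhedralCone ((activeSet w r s xb μ).image fun j => w j + r j • vb)) δ γ := by
  obtain ⟨δ₁, hδ₁, hloc⟩ := exists_le_iff_forall_mem_activeSet hepi hμ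
  obtain ⟨γ, hγ, hoff⟩ := exists_norm_sub_le_of_forall_inner_le
    ((activeSet w r s xb μ).image fun j => w j + r j • vb)
  set R := ∑ j, |r j|
  have hR : 0 ≤ R := Finset.sum_nonneg fun j _ => abs_nonneg (r j)
  set δ := δ₁ / (1 + ‖vb‖)
  have hδδ₁ : δ ≤ δ₁ := div_le_self hδ₁.le (by simp)
  have hvb : ∀ z : E, ‖z‖ ≤ δ → |⟪vb, z⟫| ≤ δ₁ := fun z hz =>
    calc |⟪vb, z⟫| ≤ ‖vb‖ * ‖z‖ := abs_real_inner_le_norm _ _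
      _ ≤ (1 + ‖vb‖) * δ := by gcongr; linarith
      _ = δ₁ := mul_div_cancel₀ _ (by positivity)
  have hlower : ∀ e (ρ : ℝ), φ (xb + e) ≤ ρ → μ + ⟪vb, e⟫ ≤ ρ := fun e ρ he => by
    have := (hstat (xb + e)).trans he
    rwa [hμ, add_sub_cancel_left, ← EReal.coe_add, EReal.coe_le_coe_iff] at this
  refine ⟨δ, γ * (R + 1),
    ⟨by positivity, by positivity, fun z hz hzδ => ?_, fun e he ρ hρ hρμ => ?_⟩⟩
  · refine le_antisymm ((hloc z _ (hzδ.trans hδδ₁) (hvb z hzδ)).2 fun j hj => ?_) ?_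
    · have := mem_polyhedralCone.1 hz _ (Finset.mem_image_of_mem _ hj)
      rwa [inner_add_left, real_inner_smul_left] at this
    · have := hstat (xb + z)
      rwa [hμ, add_sub_cancel_left, ← EReal.coe_add] at this
  · have hF : 0 ≤ ρ - μ - ⟪vb, e⟫ := by linarith [hlower e ρ hρ]
    have hact := (hloc e (ρ - μ) (he.trans hδδ₁) (abs_le.2 ⟨by
      linarith [hlower e ρ hρ, neg_abs_le ⟪vb, e⟫, hvb e he], by linarith⟩)).1
      (by rwa [add_sub_cancel])
    obtain ⟨p, hp, hep⟩ := hoff e ((R + 1) * (ρ - μ - ⟪vb, e⟫)) (by positivity) fun v hv => by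
      obtain ⟨j, hj, rfl⟩ := Finset.mem_image.1 hv
      have hrj : -r j ≤ R + 1 := by
        linarith [neg_le_abs (r j), Finset.single_le_sum (fun i _ => abs_nonneg (r i))
          (Finset.mem_univ j) (f := fun i => |r i|)]
      rw [inner_add_left, real_inner_smul_left]
      calc ⟪w j, e⟫ + r j * ⟪vb, e⟫ ≤ -r j * (ρ - μ - ⟪vb, e⟫) := by linarith [hact j hj]
        _ ≤ (R + 1) * (ρ - μ - ⟪vb, e⟫) := mul_le_mul_of_nonneg_right hrj hF
    exact ⟨p, hp, by rw [mul_assoc]; exact hep⟩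

end Polyhedral

section KL

variable {n : ℕ}

local notation "E" => EuclideanSpace ℝ (Fin n)

def HasKLExponent (g : E → ℝ) (φ : E → EReal) (xb : E) (α : ℝ) : Prop :=
  ∃ c > (0 : ℝ), ∃ ε > (0 : ℝ), ∃ ν > (0 : ℝ), ∀ x : E, ∀ t : ℝ, ‖x - xb‖ < ε →
    (g x : EReal) + φ x = ((g xb : EReal) + φ xb) + ((t : ℝ) : EReal) → 0 < t → t < ν →
    ENNReal.ofReal (c * t ^ α) ≤
      Metric.infEDist (0 : E) {v | ∃ ξ ∈ ESubdiff φ x, v = gradient g x + ξ}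

/-- The KL property at `xb` of `ψ̃ x = g x - ⟪∇g xb, x - xb⟫ + ι_K (x - xb)`. -/
def HasReducedKLExponent (g : E → ℝ) (K : Set E) (xb : E) (α : ℝ) : Prop :=
  ∃ c > (0 : ℝ), ∃ ε > (0 : ℝ), ∃ ν > (0 : ℝ), ∀ x : E,
    x - xb ∈ K → ‖x - xb‖ < ε →
    0 < g x - (inner ℝ (gradient g xb) (x - xb) : ℝ) - g xb →
    g x - (inner ℝ (gradient g xb) (x - xb) : ℝ) - g xb < ν →
    ENNReal.ofReal (c * (g x - (inner ℝ (gradient g xb) (x - xb) : ℝ) - g xb) ^ α) ≤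
      Metric.infEDist (gradient g xb - gradient g x) (normalCone K (x - xb))

variable {g : EuclideanSpace ℝ (Fin n) → ℝ} {φ : EuclideanSpace ℝ (Fin n) → EReal}
  {xb : EuclideanSpace ℝ (Fin n)} {μ δ γ α : ℝ} {C : ProperCone ℝ (EuclideanSpace ℝ (Fin n))}

namespace IsLocalConeModel

lemma eventually_eq_of_sub_mem (h : IsLocalConeModel φ xb (-gradient g xb) μ C δ γ)
    (hconv : Convex ℝ {p : E × ℝ | φ p.1 ≤ p.2}) (hgrad : Continuous (gradient g)) :
    ∀ᶠ x in 𝓝 xb, x - xb ∈ C →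
      φ x = ((μ - ⟪gradient g xb, x - xb⟫ : ℝ) : EReal) ∧
      Metric.infEDist (0 : E) {v | ∃ ξ ∈ ESubdiff φ x, v = gradient g x + ξ} =
        Metric.infEDist (gradient g xb - gradient g x) (normalCone C (x - xb)) := by
  obtain ⟨r, hr, hdist⟩ := h.exists_infEDist_ESubdiff_eq hconv
  have hnear : ∀ᶠ x in 𝓝 xb, ‖x - xb‖ ≤ min r δ := by
    filter_upwards [Metric.ball_mem_nhds xb (lt_min hr h.radius_pos)] with x hx
    exact (mem_ball_iff_norm.1 hx).le
  filter_upwards [hnear, hgrad.neg.continuousAt.eventually (Metric.ball_mem_nhds _ hr)]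
    with x hxr hxg hxC
  have hx : xb + (x - xb) = x := add_sub_cancel xb x
  constructor
  · have := h.eq_of_mem _ hxC (hxr.trans (min_le_right _ _))
    rwa [hx, inner_neg_left, ← sub_eq_add_neg] at this
  · have := hdist _ hxC (hxr.trans (min_le_left _ _)) _ hxg
    rw [hx, Pi.neg_apply] at this
    rw [infEDist_zero_setOf_eq_add, this, sub_neg_eq_add, neg_add_eq_sub]

lemma exists_eventually_le_infEDist (h : IsLocalConeModel φ xb (-gradient g xb) μ C δ γ)
    (hg : Continuous g) (hgrad : Continuous (gradient g)) :
    ∃ ν > 0, ∃ c > 0, ∀ᶠ x in 𝓝 xb, x - xb ∉ C → ∀ t : ℝ,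
      (g x : EReal) + φ x = ((g xb : EReal) + φ xb) + ((t : ℝ) : EReal) → t < ν →
      ENNReal.ofReal c ≤
        Metric.infEDist (0 : E) {v | ∃ ξ ∈ ESubdiff φ x, v = gradient g x + ξ} := by
  obtain ⟨r, hr, hfar⟩ := h.exists_le_norm_sub_of_notMem
  refine ⟨r / 2, half_pos hr, r / 2, half_pos hr, ?_⟩
  have hnear : ∀ᶠ x in 𝓝 xb, ‖x - xb‖ ≤ r := by
    filter_upwards [Metric.ball_mem_nhds xb hr] with x hx
    exact (mem_ball_iff_norm.1 hx).le
  filter_upwards [hnear, hg.continuousAt.eventually (Metric.ball_mem_nhds _ (half_pos hr)),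
    hgrad.continuousAt.eventually (Metric.ball_mem_nhds _ (half_pos hr))]
    with x hxr hgx hgradx hxC t ht htν
  rw [Real.dist_eq] at hgx
  rw [dist_eq_norm] at hgradx
  rw [h.apply_eq, ← EReal.coe_add, ← EReal.coe_add] at ht
  have hφx := EReal.eq_coe_sub_of_coe_add_eq ht
  have hx : xb + (x - xb) = x := add_sub_cancel xb x
  have hu := hfar _ hxC hxr _ (by rw [hx]; exact hφx) (by linarith [neg_abs_le (g x - g xb)])
  rw [hx] at hu
  rw [infEDist_zero_setOf_eq_add, Metric.le_infEDist]
  intro u hu'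
  rw [edist_dist, dist_eq_norm]
  refine ENNReal.ofReal_le_ofReal ?_
  have htri := norm_sub_le_norm_sub_add_norm_sub u (-gradient g x) (-gradient g xb)
  rw [norm_sub_rev u (-gradient g x), neg_sub_neg, norm_sub_rev (gradient g xb)] at htri
  linarith [hu u hu']

end IsLocalConeModel

theorem HasKLExponent.hasReducedKLExponent (hgrad : Continuous (gradient g))
    (h : IsLocalConeModel φ xb (-gradient g xb) μ C δ γ)
    (hconv : Convex ℝ {p : E × ℝ | φ p.1 ≤ p.2}) (hKL : HasKLExponent g φ xb α) :
    HasReducedKLExponent g C xb α := by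
  obtain ⟨c, hc, ε, hε, ν, hν, hKL⟩ := hKL
  obtain ⟨ε', hε', hcone⟩ := Metric.eventually_nhds_iff.1 (h.eventually_eq_of_sub_mem hconv hgrad)
  refine ⟨c, hc, min ε ε', lt_min hε hε', ν, hν, fun x hxC hx ht0 htν => ?_⟩
  obtain ⟨hφx, hdist⟩ := hcone (by rw [dist_eq_norm]; exact hx.trans_le (min_le_right _ _)) hxC
  rw [← hdist]
  refine hKL x _ (hx.trans_le (min_le_left _ _)) ?_ ht0 htν
  rw [hφx, h.apply_eq]
  norm_cast
  ring

theorem HasReducedKLExponent.hasKLExponent (hg : Continuous g) (hgrad : Continuous (gradient g))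
    (h : IsLocalConeModel φ xb (-gradient g xb) μ C δ γ)
    (hconv : Convex ℝ {p : E × ℝ | φ p.1 ≤ p.2}) (hα : 0 ≤ α)
    (hKL : HasReducedKLExponent g C xb α) : HasKLExponent g φ xb α := by
  obtain ⟨c, hc, ε, hε, ν, hν, hKL⟩ := hKL
  obtain ⟨ν₀, hν₀, c₀, hc₀, hfar⟩ := h.exists_eventually_le_infEDist hg hgrad
  obtain ⟨ε', hε', hnear⟩ :=
    Metric.eventually_nhds_iff.1 ((h.eventually_eq_of_sub_mem hconv hgrad).and hfar)
  refine ⟨min c c₀, lt_min hc hc₀, min ε ε', lt_min hε hε', min ν (min ν₀ 1),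
    lt_min hν (lt_min hν₀ one_pos), fun x t hx ht ht0 htν => ?_⟩
  obtain ⟨hcone, hoff⟩ := hnear (by rw [dist_eq_norm]; exact hx.trans_le (min_le_right _ _))
  by_cases hxC : x - xb ∈ C
  · obtain ⟨hφx, hdist⟩ := hcone hxC
    have htx : t = g x - ⟪gradient g xb, x - xb⟫ - g xb := by
      rw [hφx, h.apply_eq] at ht
      norm_cast at ht
      linarith
    subst htx
    rw [hdist]
    calc ENNReal.ofReal (min c c₀ * _ ^ α) ≤ ENNReal.ofReal (c * _ ^ α) :=
          ENNReal.ofReal_le_ofReal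
            (mul_le_mul_of_nonneg_right (min_le_left _ _) (Real.rpow_nonneg ht0.le _))
      _ ≤ _ := hKL x hxC (hx.trans_le (min_le_left _ _)) ht0 (htν.trans_le (min_le_left _ _))
  · calc ENNReal.ofReal (min c c₀ * t ^ α) ≤ ENNReal.ofReal c₀ := by
          refine ENNReal.ofReal_le_ofReal ?_
          have ht1 : t ^ α ≤ 1 := Real.rpow_le_one ht0.le
            (htν.le.trans ((min_le_right _ _).trans (min_le_right _ _))) hα
          nlinarith [min_le_right c c₀, Real.rpow_nonneg ht0.le α]
      _ ≤ _ := hoff hxC t ht (htν.trans_le ((min_le_right _ _).trans (min_le_left _ _)))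

end KL

theorem stmt11_general (n : ℕ)
    (g : EuclideanSpace ℝ (Fin n) → ℝ) (hg : ContDiff ℝ 1 g)
    (φ : EuclideanSpace ℝ (Fin n) → EReal)
    (hproper : (∀ x, φ x ≠ ⊥) ∧ (∃ x, φ x ≠ ⊤))
    (hpoly : ∃ (m : ℕ) (w : Fin m → EuclideanSpace ℝ (Fin n)) (r s : Fin m → ℝ),
      {p : EuclideanSpace ℝ (Fin n) × ℝ | φ p.1 ≤ (p.2 : EReal)} =
        {p : EuclideanSpace ℝ (Fin n) × ℝ | ∀ j, (inner ℝ (w j) p.1 : ℝ) + r j * p.2 ≤ s j})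
    (xb : EuclideanSpace ℝ (Fin n))
    (hstat : -(gradient g xb) ∈ ESubdiff φ xb)
    (K : Set (EuclideanSpace ℝ (Fin n)))
    (hK : K = normalCone (ESubdiff φ xb) (-(gradient g xb)))
    (α : ℝ) (hα : α ∈ Set.Ioo (0 : ℝ) 1) :
    ((∃ c > (0 : ℝ), ∃ ε > (0 : ℝ), ∃ ν > (0 : ℝ), ∀ x : EuclideanSpace ℝ (Fin n),
        ∀ t : ℝ, ‖x - xb‖ < ε →
        (g x : EReal) + φ x = ((g xb : EReal) + φ xb) + ((t : ℝ) : EReal) →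
        0 < t → t < ν →
        ENNReal.ofReal (c * t ^ α) ≤
          EMetric.infEdist (0 : EuclideanSpace ℝ (Fin n))
            {v | ∃ ξ ∈ ESubdiff φ x, v = gradient g x + ξ}) ↔
     (∃ c > (0 : ℝ), ∃ ε > (0 : ℝ), ∃ ν > (0 : ℝ), ∀ x : EuclideanSpace ℝ (Fin n),
        x - xb ∈ K → ‖x - xb‖ < ε →
        0 < g x - (inner ℝ (gradient g xb) (x - xb) : ℝ) - g xb →
        g x - (inner ℝ (gradient g xb) (x - xb) : ℝ) - g xb < ν →
        ENNReal.ofReal (c * (g x - (inner ℝ (gradient g xb) (x - xb) : ℝ) - g xb) ^ α) ≤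
          EMetric.infEdist (gradient g xb - gradient g x) (normalCone K (x - xb)))) := by
  obtain ⟨hbot, y, hy⟩ := hproper
  obtain ⟨m, w, r, s, hpoly⟩ := hpoly
  obtain ⟨μ, hμ⟩ := exists_eq_coe_of_mem_ESubdiff (hbot xb) hy hstat
  have hconv : Convex ℝ {p : EuclideanSpace ℝ (Fin n) × ℝ | φ p.1 ≤ p.2} :=
    hpoly ▸ convex_setOf_forall_inner_add_mul_le w r s
  obtain ⟨δ, γ, h⟩ := exists_isLocalConeModel (vb := -gradient g xb)
    (fun x ρ => by simpa using Set.ext_iff.1 hpoly (x, ρ)) hμ hstat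
  have hgrad : Continuous (gradient g) :=
    (InnerProductSpace.toDual ℝ _).symm.continuous.comp (hg.continuous_fderiv one_ne_zero)
  rw [hK, h.normalCone_ESubdiff_eq hconv hstat]
  exact ⟨HasKLExponent.hasReducedKLExponent hgrad h hconv,
    HasReducedKLExponent.hasKLExponent hg.continuous hgrad h hconv hα.1.le⟩

/-- With `ψ = g + φ`, `K = N_{∂φ(x̄)}(−∇g(x̄))` and
`ψ̃(x) = g(x) − ⟨∇g(x̄), x − x̄⟩ + ι_K(x − x̄)`, for any `α ∈ (0,1)`,
`ψ` satisfies the KL property at `x̄` with exponent `α` iff `ψ̃` does.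
Here the value `ψ(x) − ψ(x̄)` is encoded by the real number `t` with
`ψ(x) = ψ(x̄) + t`, distances to (possibly empty) sets are measured with
`EMetric.infEdist` (the distance to `∅` being `+∞`), and
`ψ̃(x) − ψ̃(x̄) = g(x) − ⟨∇g(x̄), x − x̄⟩ − g(x̄)` for `x − x̄ ∈ K`. -/
theorem stmt11 (n : ℕ) (hn : 0 < n)
    (g : EuclideanSpace ℝ (Fin n) → ℝ) (hg : ContDiff ℝ 1 g)
    (φ : EuclideanSpace ℝ (Fin n) → EReal)
    (hproper : (∀ x, φ x ≠ ⊥) ∧ (∃ x, φ x ≠ ⊤))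
    (hpoly : ∃ (m : ℕ) (w : Fin m → EuclideanSpace ℝ (Fin n)) (r s : Fin m → ℝ),
      {p : EuclideanSpace ℝ (Fin n) × ℝ | φ p.1 ≤ (p.2 : EReal)} =
        {p : EuclideanSpace ℝ (Fin n) × ℝ | ∀ j, (inner ℝ (w j) p.1 : ℝ) + r j * p.2 ≤ s j})
    (xb : EuclideanSpace ℝ (Fin n))
    (hstat : -(gradient g xb) ∈ ESubdiff φ xb)
    (K : Set (EuclideanSpace ℝ (Fin n)))
    (hK : K = normalCone (ESubdiff φ xb) (-(gradient g xb)))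
    (α : ℝ) (hα : α ∈ Set.Ioo (0 : ℝ) 1) :
    ((∃ c > (0 : ℝ), ∃ ε > (0 : ℝ), ∃ ν > (0 : ℝ), ∀ x : EuclideanSpace ℝ (Fin n),
        ∀ t : ℝ, ‖x - xb‖ < ε →
        (g x : EReal) + φ x = ((g xb : EReal) + φ xb) + ((t : ℝ) : EReal) →
        0 < t → t < ν →
        ENNReal.ofReal (c * t ^ α) ≤
          EMetric.infEdist (0 : EuclideanSpace ℝ (Fin n))
            {v | ∃ ξ ∈ ESubdiff φ x, v = gradient g x + ξ}) ↔
     (∃ c > (0 : ℝ), ∃ ε > (0 : ℝ), ∃ ν > (0 : ℝ), ∀ x : EuclideanSpace ℝ (Fin n),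
        x - xb ∈ K → ‖x - xb‖ < ε →
        0 < g x - (inner ℝ (gradient g xb) (x - xb) : ℝ) - g xb →
        g x - (inner ℝ (gradient g xb) (x - xb) : ℝ) - g xb < ν →
        ENNReal.ofReal (c * (g x - (inner ℝ (gradient g xb) (x - xb) : ℝ) - g xb) ^ α) ≤
          EMetric.infEdist (gradient g xb - gradient g x) (normalCone K (x - xb)))) :=
  stmt11_general n g hg φ hproper hpoly xb hstat K hK α hα
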